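/- arXiv:2305.00482 — 6 statements merged into one kernel-verified Lean document; each statement's English description precedes it below -/
import Mathlib

section
/- Let (H,B₁,B₂) be a Rota-Baxter system of Hopf algebras with cocycle σ = B₁ ∗ (S∘B₂) (convolution product). Then B₁∘σ = B₁ and B₂∘σ = B₂. -/
open TensorProduct Coalgebra HopfAlgebra LinearMap

variable {F : Type*} [Field F] {H : Type*} [Ring H] [HopfAlgebra F H]

/-- The descendent operation `a ⊗ b ↦ B₁(a₁) b S(B₂(a₂))` as a linear map on `H ⊗ H`. -/
noncomputable def circL (B₁ B₂ : H →ₗ[F] H) : H ⊗[F] H →ₗ[F] H :=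
  (LinearMap.mul' F H)
    ∘ₗ (TensorProduct.map ((LinearMap.mul' F H) ∘ₗ TensorProduct.map B₁ LinearMap.id)
        ((antipode (R := F)) ∘ₗ B₂))
    ∘ₗ (TensorProduct.assoc F H H H).symm.toLinearMap
    ∘ₗ (TensorProduct.map LinearMap.id (TensorProduct.comm F H H).toLinearMap)
    ∘ₗ (TensorProduct.assoc F H H H).toLinearMap
    ∘ₗ (TensorProduct.map Coalgebra.comul LinearMap.id)

/-- The descendent operation `a ∘ b = B₁(a₁) b S(B₂(a₂))`. -/
noncomputable def circ (B₁ B₂ : H →ₗ[F] H) (a b : H) : H := circL B₁ B₂ (a ⊗ₜ[F] b)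

/-- The cocycle `σ = B₁ ∗ (S ∘ B₂)`, i.e. `σ(a) = B₁(a₁) S(B₂(a₂))`. -/
noncomputable def cocycleL (B₁ B₂ : H →ₗ[F] H) : H →ₗ[F] H :=
  (LinearMap.mul' F H) ∘ₗ (TensorProduct.map B₁ ((antipode (R := F)) ∘ₗ B₂)) ∘ₗ Coalgebra.comul

/-- `(H, B₁, B₂)` is a Rota-Baxter system of Hopf algebras: `B₁, B₂` are coalgebra
homomorphisms sending `1` to `1` such that `Bᵢ(a)Bᵢ(b) = Bᵢ(B₁(a₁) b S(B₂(a₂)))`. -/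
noncomputable def IsRBSystem (B₁ B₂ : H →ₗ[F] H) : Prop :=
  (Coalgebra.comul ∘ₗ B₁ = TensorProduct.map B₁ B₁ ∘ₗ Coalgebra.comul) ∧
  (Coalgebra.counit ∘ₗ B₁ = Coalgebra.counit (R := F)) ∧
  (Coalgebra.comul ∘ₗ B₂ = TensorProduct.map B₂ B₂ ∘ₗ Coalgebra.comul) ∧
  (Coalgebra.counit ∘ₗ B₂ = Coalgebra.counit (R := F)) ∧
  B₁ 1 = 1 ∧ B₂ 1 = 1 ∧
  (∀ a b : H, B₁ a * B₁ b = B₁ (circ B₁ B₂ a b)) ∧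
  (∀ a b : H, B₂ a * B₂ b = B₂ (circ B₁ B₂ a b))

lemma circ_one_eq (B₁ B₂ : H →ₗ[F] H) (a : H) : circ B₁ B₂ a 1 = cocycleL B₁ B₂ a := by
  unfold circ circL cocycleL
  simp only [LinearMap.comp_apply, TensorProduct.map_tmul, LinearMap.id_apply]
  induction Coalgebra.comul (R := F) a with
  | zero =>
      rw [TensorProduct.zero_tmul]
      simp only [map_zero, LinearEquiv.coe_coe]
  | tmul x y =>
      simp only [LinearEquiv.coe_coe, TensorProduct.assoc_tmul, TensorProduct.map_tmul,
        LinearMap.id_apply, TensorProduct.comm_tmul, TensorProduct.assoc_symm_tmul,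
        LinearMap.comp_apply, LinearMap.mul'_apply, mul_one]
  | add s t hs ht =>
      rw [TensorProduct.add_tmul]
      simp only [map_add, LinearEquiv.coe_coe] at hs ht ⊢
      rw [hs, ht]

/-- If `(H,B₁,B₂)` is a Rota-Baxter system of Hopf algebras (H cocommutative) with
cocycle `σ = B₁ ∗ (S∘B₂)`, then `B₁ ∘ σ = B₁` and `B₂ ∘ σ = B₂`. -/
theorem rbSystem_comp_cocycle
    (hcc : ∀ a : H, (TensorProduct.comm F H H) (Coalgebra.comul a) = Coalgebra.comul a)
    (B₁ B₂ : H →ₗ[F] H) (hRB : IsRBSystem B₁ B₂) :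
    B₁ ∘ₗ cocycleL B₁ B₂ = B₁ ∧ B₂ ∘ₗ cocycleL B₁ B₂ = B₂ := by
  
  obtain ⟨_, _, _, _, h1, h2, hB1, hB2⟩ := hRB
  constructor <;> ext a
  · simp only [LinearMap.comp_apply, ← circ_one_eq, ← hB1 a 1, h1, mul_one]
  · simp only [LinearMap.comp_apply, ← circ_one_eq, ← hB2 a 1, h2, mul_one]
end

section
/- Let (H,B) be a Rota-Baxter Hopf algebra and define B₁:H→H by B₁(a)=a₁B(a₂). Then (H,B₁,B) is a Rota-Baxter system of Hopf algebras, i.e. B₁ is a coalgebra homomorphism with B₁(1)=1, and B₁(a)B₁(b)=B₁(B₁(a₁)bS(B(a₂))) and B(a)B(b)=B(B₁(a₁)bS(B(a₂))) for all a,b∈H. -/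
open TensorProduct Coalgebra HopfAlgebra LinearMap

variable {F : Type*} [Field F] {H : Type*} [Ring H] [HopfAlgebra F H]

/-! In a cocommutative Hopf algebra the comultiplication and the antipode are coalgebra maps, as
is the multiplication of any bialgebra. Hence `B₁ = μ ∘ (id ⊗ B) ∘ Δ`, the convolution `id * B`,
is a coalgebra map, and so is the descendent operation `circL B₁ B : a ⊗ b ↦ a ∘ b`. The identity
`B(a)B(b) = B(a ∘ b)` is the Rota-Baxter identity rebracketed by coassociativity. Since `circL` is
a coalgebra map, `B₁(a ∘ b) = (a₁ ∘ b₁) B(a₂ ∘ b₂) = (a₁ ∘ b₁) B(a₂) B(b₂)`, and the factor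
`S(B(a₂)) B(a₃)` hidden in it collapses because `(S ∘ B) * B = 1`, leaving `B₁(a) b₁ B(b₂)`.
Finally `B(1)` is group-like and idempotent, hence equal to `1`. -/

open WithConv

section Cocommutative

variable {R A : Type*} [CommSemiring R] [Semiring A] [HopfAlgebra R A] [IsCocomm R A]

lemma map_antipode_comp_comul_mul_comul :
    toConv (map (antipode R) (antipode R) ∘ₗ comul) * toConv (comul (R := R) (A := A)) = 1 := by
  -- `comul` is a coalgebra map, so `((S ⊗ S) ∘ Δ) * Δ = ((S * id) ⊗ (S * id)) ∘ Δ`.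
  have h := convMul_comp_coalgHom_distrib (toConv (map (antipode R (A := A)) (antipode R)))
    (toConv (map LinearMap.id LinearMap.id)) (comulCoalgHom R A)
  have h_one : map (ofConv 1) (ofConv 1) = (1 : WithConv (A ⊗[R] A →ₗ[R] A ⊗[R] A)).ofConv := by
    ext x y
    simp [Algebra.algebraMap_eq_smul_one, smul_tmul', tmul_smul, smul_smul, mul_comm,
      Algebra.TensorProduct.one_def]
  rw [map_convMul_map, antipode_mul_id, map_id, ofConv_toConv, h_one] at h
  apply ofConv_injective
  refine h.symm.trans ?_
  ext a
  simp

lemma comul_comp_antipode :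
    comul ∘ₗ antipode R (A := A) = map (antipode R) (antipode R) ∘ₗ comul :=
  congrArg ofConv (left_inv_eq_right_inv map_antipode_comp_comul_mul_comul comul_right_inv).symm

variable (R A) in
noncomputable def antipodeCoalgHom : A →ₗc[R] A where
  __ := antipode R
  counit_comp := counit_comp_antipode
  map_comp_comul := comul_comp_antipode.symm

end Cocommutative

section TensorComm

variable (R M N : Type*) [CommSemiring R] [AddCommMonoid M] [Module R M] [Coalgebra R M]
  [AddCommMonoid N] [Module R N] [Coalgebra R N]

noncomputable def commCoalgHom : M ⊗[R] N →ₗc[R] N ⊗[R] M where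
  __ := (TensorProduct.comm R M N).toLinearMap
  counit_comp := by ext x y; simp [mul_comm]
  map_comp_comul := by
    ext x y
    simpa [← (ℛ R x).eq, ← (ℛ R y).eq, sum_tmul, tmul_sum] using Finset.sum_comm

end TensorComm

section Convolution

variable {R C A : Type*} [CommSemiring R] [AddCommMonoid C] [Module R C] [Coalgebra R C]

lemma mulRight_comp_convMul [Semiring A] [Algebra R A] (f g : C →ₗ[R] A) (b : A) :
    mulRight R b ∘ₗ (toConv f * toConv g).ofConv =
      (toConv f * toConv (mulRight R b ∘ₗ g)).ofConv := by
  ext c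
  simp [(ℛ R c).convMul_apply, mul_assoc]

lemma antipode_comp_convMul_self [Semiring A] [HopfAlgebra R A] (B : C →ₗc[R] A) :
    toConv (antipode R ∘ₗ (B : C →ₗ[R] A)) * toConv (B : C →ₗ[R] A) = 1 := by
  have h := convMul_comp_coalgHom_distrib (toConv (antipode R (A := A))) (toConv .id) B
  rw [antipode_mul_id] at h
  apply ofConv_injective
  refine h.symm.trans ?_
  ext c
  simp

variable [IsCocomm R C] [Semiring A] [Bialgebra R A]

noncomputable def convMulCoalgHom (f g : C →ₗc[R] A) : C →ₗc[R] A :=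
  (Bialgebra.mulCoalgHom R A).comp <|
    (Coalgebra.TensorProduct.map f g).comp (comulCoalgHom R C)

lemma convMulCoalgHom_apply (f g : C →ₗc[R] A) (c : C) :
    convMulCoalgHom f g c = (toConv (f : C →ₗ[R] A) * toConv (g : C →ₗ[R] A)) c :=
  rfl

end Convolution

lemma circ_eq_convMul (B₁ B₂ : H →ₗ[F] H) (a b : H) :
    circ B₁ B₂ a b = (toConv (mulRight F b ∘ₗ B₁) * toConv (antipode F ∘ₗ B₂)) a := by
  rw [(ℛ F a).convMul_apply]
  simp [circ, circL, ← (ℛ F a).eq, sum_tmul]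

lemma mul'_map_comul_eq_circ (B : H →ₗ[F] H) (a b : H) :
    mul' F H (map LinearMap.id (mul' F H ∘ₗ map (mulRight F b ∘ₗ B) (antipode F ∘ₗ B))
      (map LinearMap.id comul (comul a))) =
      circ (mul' F H ∘ₗ map LinearMap.id B ∘ₗ comul) B a b := by
  have h : toConv (mulRight F b ∘ₗ (toConv LinearMap.id * toConv B).ofConv) *
        toConv (antipode F ∘ₗ B) =
      toConv LinearMap.id * (toConv (mulRight F b ∘ₗ B) * toConv (antipode F ∘ₗ B)) := by
    rw [mulRight_comp_convMul, toConv_ofConv, mul_assoc]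
  rw [circ_eq_convMul, ← LinearMap.comp_apply (map _ _), ← map_comp, LinearMap.id_comp]
  exact congr($h a).symm

lemma circ_one_one (B₁ B₂ : H →ₗ[F] H) : circ B₁ B₂ 1 1 = B₁ 1 * antipode F (B₂ 1) := by
  simp [circ, circL, Algebra.TensorProduct.one_def]

lemma sum_circ_mul (B₁ : H →ₗ[F] H) (B : H →ₗc[F] H) (u a : H) {ι : Type*} (ρ : Repr F a ι) :
    ∑ i ∈ ρ.index, circ B₁ B (ρ.left i) u * B (ρ.right i) = B₁ a * u := by
  have h : toConv (mulRight F u ∘ₗ B₁) * toConv (antipode F ∘ₗ (B : H →ₗ[F] H)) *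
      toConv (B : H →ₗ[F] H) = toConv (mulRight F u ∘ₗ B₁) := by
    rw [mul_assoc, antipode_comp_convMul_self, mul_one]
  simpa [circ_eq_convMul, ρ.convMul_apply] using congr($h a)

section Cocommutative

variable [IsCocomm F H]

noncomputable def circCoalgHom (B₁ B₂ : H →ₗc[F] H) : H ⊗[F] H →ₗc[F] H :=
  (Bialgebra.mulCoalgHom F H).comp <|
    (Coalgebra.TensorProduct.map ((Bialgebra.mulCoalgHom F H).comp
      (Coalgebra.TensorProduct.map B₁ (CoalgHom.id F H))) ((antipodeCoalgHom F H).comp B₂)).comp <|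
    (Coalgebra.TensorProduct.assoc F F H H H).symm.toCoalgHom.comp <|
    (Coalgebra.TensorProduct.map (CoalgHom.id F H) (commCoalgHom F H H)).comp <|
    (Coalgebra.TensorProduct.assoc F F H H H).toCoalgHom.comp <|
    Coalgebra.TensorProduct.map (comulCoalgHom F H) (CoalgHom.id F H)

lemma toLinearMap_circCoalgHom (B₁ B₂ : H →ₗc[F] H) :
    (circCoalgHom B₁ B₂).toLinearMap = circL B₁ B₂ :=
  rfl

lemma convMulCoalgHom_id_mul_eq_circ (B : H →ₗc[F] H)
    (hRB : ∀ a b : H, B a * B b = B (circ (convMulCoalgHom (.id F H) B) (B : H →ₗ[F] H) a b))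
    (a b : H) :
    convMulCoalgHom (.id F H) B a * convMulCoalgHom (.id F H) B b =
      convMulCoalgHom (.id F H) B (circ (convMulCoalgHom (.id F H) B) (B : H →ₗ[F] H) a b) := by
  set B₁ := convMulCoalgHom (.id F H) B
  have hcomp : (B₁ : H →ₗ[F] H) ∘ₗ circL B₁ B =
      (toConv (circL B₁ B) * toConv (mul' F H ∘ₗ map (B : H →ₗ[F] H) B)).ofConv := by
    have h := convMul_comp_coalgHom_distrib (toConv LinearMap.id) (toConv (B : H →ₗ[F] H))
      (circCoalgHom B₁ B)
    rw [toLinearMap_circCoalgHom] at h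
    refine h.trans ?_
    congr 3
    ext x y
    exact (hRB x y).symm
  have h := congr($hcomp (a ⊗ₜ b))
  rw [((ℛ F a).tmul (ℛ F b)).convMul_apply] at h
  calc B₁ a * B₁ b
      = ∑ j ∈ (ℛ F b).index, B₁ a * (ℛ F b).left j * B ((ℛ F b).right j) := by
        rw [convMulCoalgHom_apply _ _ b, (ℛ F b).convMul_apply, Finset.mul_sum]
        simp [mul_assoc]
    _ = ∑ j ∈ (ℛ F b).index, ∑ i ∈ (ℛ F a).index,
          circ (B₁ : H →ₗ[F] H) (B : H →ₗ[F] H) ((ℛ F a).left i) ((ℛ F b).left j) *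
            B ((ℛ F a).right i) * B ((ℛ F b).right j) := by
        simp only [← Finset.sum_mul, sum_circ_mul, LinearMap.coe_coe]
    _ = B₁ (circ (B₁ : H →ₗ[F] H) (B : H →ₗ[F] H) a b) := by
        rw [show B₁ (circ (B₁ : H →ₗ[F] H) (B : H →ₗ[F] H) a b) =
          ((B₁ : H →ₗ[F] H) ∘ₗ circL B₁ B) (a ⊗ₜ b) from rfl, h, Repr.tmul_index,
          Finset.sum_product_right]
        simp [circ, mul_assoc]

end Cocommutative

/-- If `(H,B)` is a Rota-Baxter Hopf algebra, i.e. `B` is a coalgebra homomorphism with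
`B(a)B(b) = B(a₁ B(a₂) b S(B(a₃)))`, then `(H, B₁, B)` with `B₁(a) = a₁ B(a₂)` is a
Rota-Baxter system of Hopf algebras. -/
theorem rbHopf_gives_rbSystem
    (hcc : ∀ a : H, (TensorProduct.comm F H H) (Coalgebra.comul a) = Coalgebra.comul a)
    (B : H →ₗ[F] H)
    (hBc : Coalgebra.comul ∘ₗ B = TensorProduct.map B B ∘ₗ Coalgebra.comul)
    (hBe : Coalgebra.counit ∘ₗ B = Coalgebra.counit (R := F))
    (hRB : ∀ a b : H, B a * B b =
      B (LinearMap.mul' F H (TensorProduct.map LinearMap.id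
          ((LinearMap.mul' F H) ∘ₗ TensorProduct.map
            ((LinearMap.mulRight F b) ∘ₗ B) ((antipode (R := F)) ∘ₗ B))
          (TensorProduct.map LinearMap.id Coalgebra.comul (Coalgebra.comul a))))) :
    IsRBSystem ((LinearMap.mul' F H) ∘ₗ TensorProduct.map LinearMap.id B ∘ₗ Coalgebra.comul) B := by
  have : IsCocomm F H := ⟨LinearMap.ext hcc⟩
  let Bc : H →ₗc[F] H := { B with counit_comp := hBe, map_comp_comul := hBc.symm }
  let B₁ := convMulCoalgHom (.id F H) Bc
  have hRB' : ∀ a b, B a * B b = B (circ B₁ B a b) := fun a b =>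
    (hRB a b).trans (congrArg B (mul'_map_comul_eq_circ B a b))
  have hB₁_one : (B₁ : H →ₗ[F] H) 1 = B 1 := by
    show (mul' F H ∘ₗ map LinearMap.id B ∘ₗ comul) 1 = B 1
    simp [Algebra.TensorProduct.one_def]
  have hB_one : B 1 = 1 := by
    have hg : IsGroupLikeElem F (B 1) := IsGroupLikeElem.one.map Bc
    refine hg.isUnit.mul_eq_left.mp ?_
    rw [hRB', circ_one_one, hB₁_one, hg.mul_antipode_cancel]
  exact ⟨B₁.map_comp_comul.symm, B₁.counit_comp, hBc, hBe, hB₁_one.trans hB_one, hB_one,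
    convMulCoalgHom_id_mul_eq_circ Bc hRB', hRB'⟩
end

section
/- Let (H,B₁,B₂) be a Rota-Baxter system of Hopf algebras whose cocycle σ is surjective. Then σ is the identity map of H and B₂ is a Rota-Baxter operator on H, i.e. B₂(a)B₂(b)=B₂(a₁B₂(a₂)bS(B₂(a₃))) for all a,b∈H. -/
open TensorProduct Coalgebra HopfAlgebra LinearMap

variable {F : Type*} [Field F] {H : Type*} [Ring H] [HopfAlgebra F H]

namespace RBAux

variable {A : Type*} [Semiring A] [Algebra F A]

/-- Convolution product of linear maps from the coalgebra `H` to an algebra `A`. -/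
noncomputable def conv (f g : H →ₗ[F] A) : H →ₗ[F] A :=
  LinearMap.mul' F A ∘ₗ TensorProduct.map f g ∘ₗ Coalgebra.comul

/-- Convolution unit. -/
noncomputable def cunit : H →ₗ[F] A := Algebra.linearMap F A ∘ₗ Coalgebra.counit

lemma conv_apply (f g : H →ₗ[F] A) (a : H) :
    conv f g a = LinearMap.mul' F A (TensorProduct.map f g (Coalgebra.comul a)) := rfl

lemma mul_assoc'' (v : A ⊗[F] (A ⊗[F] A)) :
    LinearMap.mul' F A ((LinearMap.mul' F A).rTensor A ((TensorProduct.assoc F A A A).symm v))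
      = LinearMap.mul' F A ((LinearMap.mul' F A).lTensor A v) := by
  induction v using TensorProduct.induction_on with
  | zero => simp
  | tmul x w =>
    induction w using TensorProduct.induction_on with
    | zero => simp [tmul_zero]
    | tmul y z => simp [mul'_apply, mul_assoc]
    | add u v hu hv => simp only [tmul_add, map_add, hu, hv]
  | add u v hu hv => simp only [map_add, hu, hv]

lemma aux_left (f g h : H →ₗ[F] A) (x : H ⊗[F] H) :
    LinearMap.mul' F A (TensorProduct.map (conv f g) h x)
      = LinearMap.mul' F A ((LinearMap.mul' F A).rTensor A
          (TensorProduct.map (TensorProduct.map f g) h ((comul (R := F)).rTensor H x))) := by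
  induction x using TensorProduct.induction_on with
  | zero => simp
  | tmul a b => simp [conv_apply, mul'_apply]
  | add u v hu hv => simp only [map_add, hu, hv]

lemma aux_right (f g h : H →ₗ[F] A) (x : H ⊗[F] H) :
    LinearMap.mul' F A (TensorProduct.map f (conv g h) x)
      = LinearMap.mul' F A ((LinearMap.mul' F A).lTensor A
          (TensorProduct.map f (TensorProduct.map g h) ((comul (R := F)).lTensor H x))) := by
  induction x using TensorProduct.induction_on with
  | zero => simp
  | tmul a b => simp [conv_apply, mul'_apply]
  | add u v hu hv => simp only [map_add, hu, hv]

lemma conv_assoc (f g h : H →ₗ[F] A) : conv (conv f g) h = conv f (conv g h) := by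
  ext a
  show LinearMap.mul' F A (TensorProduct.map (conv f g) h (comul a))
      = LinearMap.mul' F A (TensorProduct.map f (conv g h) (comul a))
  rw [aux_left, aux_right, ← coassoc_symm_apply, TensorProduct.map_map_assoc_symm,
    mul_assoc'']

lemma cunit_conv (f : H →ₗ[F] A) : conv cunit f = f := by
  ext a
  have h1 : (TensorProduct.map (cunit : H →ₗ[F] A) f)
      = TensorProduct.map (Algebra.linearMap F A) f ∘ₗ (counit (R := F)).rTensor H := by
    ext x y; simp [cunit]
  show LinearMap.mul' F A (TensorProduct.map cunit f (comul a)) = f a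
  rw [h1, comp_apply, rTensor_counit_comul]
  simp [mul'_apply]

lemma conv_cunit (f : H →ₗ[F] A) : conv f cunit = f := by
  ext a
  have h1 : (TensorProduct.map f (cunit : H →ₗ[F] A))
      = TensorProduct.map f (Algebra.linearMap F A) ∘ₗ (counit (R := F)).lTensor H := by
    ext x y; simp [cunit]
  show LinearMap.mul' F A (TensorProduct.map f cunit (comul a)) = f a
  rw [h1, comp_apply, lTensor_counit_comul]
  simp [mul'_apply]

lemma conv_antipode_id : conv (antipode (R := F) : H →ₗ[F] H) LinearMap.id = cunit :=
  mul_antipode_rTensor_comul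

lemma conv_id_antipode : conv (LinearMap.id : H →ₗ[F] H) (antipode (R := F)) = cunit :=
  mul_antipode_lTensor_comul

lemma conv_inv_unique {f g g' : H →ₗ[F] A} (h1 : conv f g = cunit)
    (h2 : conv g' f = cunit) : g = g' := by
  have h := conv_assoc g' f g
  rw [h2, h1, cunit_conv, conv_cunit] at h
  exact h

lemma algHom_comp_conv {A' : Type*} [Semiring A'] [Algebra F A'] (ψ : A →ₐ[F] A')
    (f g : H →ₗ[F] A) :
    ψ.toLinearMap ∘ₗ conv f g = conv (ψ.toLinearMap ∘ₗ f) (ψ.toLinearMap ∘ₗ g) := by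
  ext a
  show ψ (LinearMap.mul' F A (TensorProduct.map f g (comul a)))
      = LinearMap.mul' F A' (TensorProduct.map (ψ.toLinearMap ∘ₗ f) (ψ.toLinearMap ∘ₗ g) (comul a))
  induction comul (R := F) a using TensorProduct.induction_on with
  | zero => simp
  | tmul x y => simp [mul'_apply]
  | add u v hu hv => simp only [map_add, hu, hv]

lemma conv_comp_coalgMap {φ : H →ₗ[F] H}
    (hφ : Coalgebra.comul ∘ₗ φ = TensorProduct.map φ φ ∘ₗ Coalgebra.comul)
    (f g : H →ₗ[F] A) :
    conv (f ∘ₗ φ) (g ∘ₗ φ) = conv f g ∘ₗ φ := by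
  ext a
  have hφa : comul (R := F) (φ a) = TensorProduct.map φ φ (comul a) := congr($hφ a)
  show LinearMap.mul' F A (TensorProduct.map (f ∘ₗ φ) (g ∘ₗ φ) (comul a))
      = LinearMap.mul' F A (TensorProduct.map f g (comul (φ a)))
  rw [hφa]
  induction comul (R := F) a using TensorProduct.induction_on with
  | zero => simp
  | tmul x y => simp [mul'_apply]
  | add u v hu hv => simp only [map_add, hu, hv]

lemma mulRight_conv (b : H) (f g : H →ₗ[F] H) :
    mulRight F b ∘ₗ conv f g = conv f (mulRight F b ∘ₗ g) := by
  ext a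
  show (conv f g a) * b = LinearMap.mul' F H (TensorProduct.map f (mulRight F b ∘ₗ g) (comul a))
  rw [conv_apply]
  induction comul (R := F) a using TensorProduct.induction_on with
  | zero => simp
  | tmul x y => simp [mul'_apply, mul_assoc]
  | add u v hu hv => simp only [map_add, hu, hv, add_mul]

/-- `a ↦ a ⊗ 1`. -/
noncomputable def jone : H →ₗ[F] H ⊗[F] H := (TensorProduct.mk F H H).flip 1
/-- `a ↦ 1 ⊗ a`. -/
noncomputable def jtwo : H →ₗ[F] H ⊗[F] H := TensorProduct.mk F H H 1

@[simp] lemma jone_apply (a : H) : (jone : H →ₗ[F] H ⊗[F] H) a = a ⊗ₜ[F] 1 := rfl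
@[simp] lemma jtwo_apply (a : H) : (jtwo : H →ₗ[F] H ⊗[F] H) a = 1 ⊗ₜ[F] a := rfl

lemma conv_jone_jtwo (f g : H →ₗ[F] H) :
    conv (jone ∘ₗ f) (jtwo ∘ₗ g) = TensorProduct.map f g ∘ₗ Coalgebra.comul := by
  ext a
  show LinearMap.mul' F (H ⊗[F] H) (TensorProduct.map (jone ∘ₗ f) (jtwo ∘ₗ g) (comul a))
      = TensorProduct.map f g (comul a)
  induction comul (R := F) a using TensorProduct.induction_on with
  | zero => simp
  | tmul x y => simp [mul'_apply, Algebra.TensorProduct.tmul_mul_tmul]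
  | add u v hu hv => simp only [map_add, hu, hv]

lemma conv_jtwo_jone
    (hcc : ∀ a : H, (TensorProduct.comm F H H) (Coalgebra.comul a) = Coalgebra.comul a)
    (f g : H →ₗ[F] H) :
    conv (jtwo ∘ₗ f) (jone ∘ₗ g) = TensorProduct.map g f ∘ₗ Coalgebra.comul := by
  ext a
  show LinearMap.mul' F (H ⊗[F] H) (TensorProduct.map (jtwo ∘ₗ f) (jone ∘ₗ g) (comul a))
      = TensorProduct.map g f (comul a)
  conv_rhs => rw [← hcc a]
  induction comul (R := F) a using TensorProduct.induction_on with
  | zero => simp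
  | tmul x y => simp [mul'_apply, Algebra.TensorProduct.tmul_mul_tmul]
  | add u v hu hv => simp only [map_add, hu, hv]

lemma conv_jone_jone (f g : H →ₗ[F] H) :
    conv (jone ∘ₗ f) (jone ∘ₗ g) = jone ∘ₗ conv f g := by
  ext a
  show LinearMap.mul' F (H ⊗[F] H) (TensorProduct.map (jone ∘ₗ f) (jone ∘ₗ g) (comul a))
      = jone (LinearMap.mul' F H (TensorProduct.map f g (comul a)))
  induction comul (R := F) a using TensorProduct.induction_on with
  | zero => simp
  | tmul x y => simp [mul'_apply, Algebra.TensorProduct.tmul_mul_tmul]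
  | add u v hu hv => simp only [map_add, hu, hv, tmul_add, add_tmul]

lemma conv_jtwo_jtwo (f g : H →ₗ[F] H) :
    conv (jtwo ∘ₗ f) (jtwo ∘ₗ g) = jtwo ∘ₗ conv f g := by
  ext a
  show LinearMap.mul' F (H ⊗[F] H) (TensorProduct.map (jtwo ∘ₗ f) (jtwo ∘ₗ g) (comul a))
      = jtwo (LinearMap.mul' F H (TensorProduct.map f g (comul a)))
  induction comul (R := F) a using TensorProduct.induction_on with
  | zero => simp
  | tmul x y => simp [mul'_apply, Algebra.TensorProduct.tmul_mul_tmul]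
  | add u v hu hv => simp only [map_add, hu, hv, tmul_add, add_tmul]

lemma jone_cunit : (jone : H →ₗ[F] H ⊗[F] H) ∘ₗ (cunit : H →ₗ[F] H)
    = (cunit : H →ₗ[F] H ⊗[F] H) := by
  ext a
  simp [cunit, Algebra.TensorProduct.algebraMap_apply]

lemma jtwo_cunit : (jtwo : H →ₗ[F] H ⊗[F] H) ∘ₗ (cunit : H →ₗ[F] H)
    = (cunit : H →ₗ[F] H ⊗[F] H) := by
  ext a
  simp only [comp_apply, jtwo_apply, cunit, Algebra.linearMap_apply]
  rw [Algebra.algebraMap_eq_smul_one, ← smul_tmul, ← smul_tmul',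
    ← Algebra.TensorProduct.one_def, ← Algebra.algebraMap_eq_smul_one]

lemma comul_cunit : (comul : H →ₗ[F] H ⊗[F] H) ∘ₗ (cunit : H →ₗ[F] H)
    = (cunit : H →ₗ[F] H ⊗[F] H) := by
  ext a
  show comul (R := F) (algebraMap F H (counit a)) = algebraMap F (H ⊗[F] H) (counit a)
  exact (Bialgebra.comulAlgHom F H).commutes _

lemma conv_N_comul
    (hcc : ∀ a : H, (TensorProduct.comm F H H) (Coalgebra.comul a) = Coalgebra.comul a) :
    conv (TensorProduct.map (antipode (R := F)) (antipode (R := F)) ∘ₗ comul)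
      (comul : H →ₗ[F] H ⊗[F] H) = cunit := by
  have hN : TensorProduct.map (antipode (R := F)) (antipode (R := F))
        ∘ₗ (comul : H →ₗ[F] H ⊗[F] H)
      = conv (jone ∘ₗ antipode (R := F)) (jtwo ∘ₗ antipode (R := F)) :=
    (conv_jone_jtwo _ _).symm
  have hΔ : (comul : H →ₗ[F] H ⊗[F] H)
      = conv (jtwo ∘ₗ (LinearMap.id : H →ₗ[F] H)) (jone ∘ₗ (LinearMap.id : H →ₗ[F] H)) := by
    rw [conv_jtwo_jone hcc, TensorProduct.map_id, id_comp]
  rw [hN]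
  conv_lhs => rw [hΔ]
  rw [conv_assoc, ← conv_assoc (jtwo ∘ₗ antipode (R := F)),
    conv_jtwo_jtwo, conv_antipode_id, jtwo_cunit, cunit_conv,
    conv_jone_jone, conv_antipode_id, jone_cunit]

lemma antipode_comul
    (hcc : ∀ a : H, (TensorProduct.comm F H H) (Coalgebra.comul a) = Coalgebra.comul a) :
    (comul : H →ₗ[F] H ⊗[F] H) ∘ₗ antipode (R := F)
      = TensorProduct.map (antipode (R := F)) (antipode (R := F)) ∘ₗ comul := by
  have h1 : conv (comul : H →ₗ[F] H ⊗[F] H)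
      ((comul : H →ₗ[F] H ⊗[F] H) ∘ₗ antipode (R := F)) = cunit := by
    have h := algHom_comp_conv (Bialgebra.comulAlgHom F H) (LinearMap.id : H →ₗ[F] H)
      (antipode (R := F))
    rw [conv_id_antipode] at h
    have h2 : (Bialgebra.comulAlgHom F H).toLinearMap = (comul : H →ₗ[F] H ⊗[F] H) := rfl
    rw [h2, comp_id, comul_cunit] at h
    exact h.symm
  exact conv_inv_unique h1 (conv_N_comul hcc)

lemma conv_split
    (hcc : ∀ a : H, (TensorProduct.comm F H H) (Coalgebra.comul a) = Coalgebra.comul a)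
    (f f' g g' : H →ₗ[F] H) :
    conv (TensorProduct.map f f' ∘ₗ comul) (TensorProduct.map g g' ∘ₗ comul)
      = TensorProduct.map (conv f g) (conv f' g') ∘ₗ (comul : H →ₗ[F] H ⊗[F] H) := by
  calc conv (TensorProduct.map f f' ∘ₗ comul) (TensorProduct.map g g' ∘ₗ comul)
      = conv (conv (jone ∘ₗ f) (jtwo ∘ₗ f')) (conv (jone ∘ₗ g) (jtwo ∘ₗ g')) := by
        rw [conv_jone_jtwo, conv_jone_jtwo]
    _ = conv (jone ∘ₗ f) (conv (conv (jtwo ∘ₗ f') (jone ∘ₗ g)) (jtwo ∘ₗ g')) := by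
        rw [conv_assoc, ← conv_assoc (jtwo ∘ₗ f') (jone ∘ₗ g) (jtwo ∘ₗ g')]
    _ = conv (jone ∘ₗ f) (conv (conv (jone ∘ₗ g) (jtwo ∘ₗ f')) (jtwo ∘ₗ g')) := by
        rw [conv_jtwo_jone hcc, conv_jone_jtwo]
    _ = conv (conv (jone ∘ₗ f) (jone ∘ₗ g)) (conv (jtwo ∘ₗ f') (jtwo ∘ₗ g')) := by
        rw [conv_assoc (jone ∘ₗ g) (jtwo ∘ₗ f') (jtwo ∘ₗ g'),
          ← conv_assoc (jone ∘ₗ f) (jone ∘ₗ g) (conv (jtwo ∘ₗ f') (jtwo ∘ₗ g'))]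
    _ = conv (jone ∘ₗ conv f g) (jtwo ∘ₗ conv f' g') := by
        rw [conv_jone_jone, conv_jtwo_jtwo]
    _ = TensorProduct.map (conv f g) (conv f' g') ∘ₗ comul := conv_jone_jtwo _ _

end RBAux

set_option synthInstance.maxHeartbeats 1000000 in
set_option maxHeartbeats 1000000 in
lemma circ_eq_conv (B₁ B₂ : H →ₗ[F] H) (a b : H) :
    circ B₁ B₂ a b
      = RBAux.conv (mulRight F b ∘ₗ B₁) ((antipode (R := F)) ∘ₗ B₂) a := by
  rw [circ, circL, RBAux.conv_apply]
  simp only [comp_apply, LinearEquiv.coe_coe, TensorProduct.map_tmul, id_coe, id_eq]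
  induction comul (R := F) a using TensorProduct.induction_on with
  | zero => simp only [zero_tmul, map_zero]
  | tmul x y =>
      simp [mul'_apply, TensorProduct.assoc_tmul, TensorProduct.comm_tmul,
        TensorProduct.assoc_symm_tmul]
  | add u v hu hv => simp only [add_tmul, map_add, hu, hv]

/-- If the cocycle `σ` of a Rota-Baxter system of Hopf algebras is surjective, then
`σ = id` and `B₂` is a Rota-Baxter operator on `H`:
`B₂(a)B₂(b) = B₂(a₁ B₂(a₂) b S(B₂(a₃)))`. -/
theorem rbSystem_surjective_cocycle
    (hcc : ∀ a : H, (TensorProduct.comm F H H) (Coalgebra.comul a) = Coalgebra.comul a)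
    (B₁ B₂ : H →ₗ[F] H) (hRB : IsRBSystem B₁ B₂)
    (hsurj : Function.Surjective (cocycleL B₁ B₂)) :
    cocycleL B₁ B₂ = LinearMap.id ∧
    ∀ a b : H, B₂ a * B₂ b =
      B₂ (LinearMap.mul' F H (TensorProduct.map LinearMap.id
          ((LinearMap.mul' F H) ∘ₗ TensorProduct.map
            ((LinearMap.mulRight F b) ∘ₗ B₂) ((antipode (R := F)) ∘ₗ B₂))
          (TensorProduct.map LinearMap.id Coalgebra.comul (Coalgebra.comul a)))) := by
  obtain ⟨h1Δ, h1ε, h2Δ, h2ε, h11, h21, hB1, hB2⟩ := hRB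
  have hσdef : cocycleL B₁ B₂ = RBAux.conv B₁ ((antipode (R := F)) ∘ₗ B₂) := rfl
  -- `circ a 1 = σ a`
  have hcirc1 : ∀ a : H, circ B₁ B₂ a 1 = cocycleL B₁ B₂ a := by
    intro a
    rw [circ_eq_conv, mulRight_one, id_comp, hσdef]
  -- `B₁ ∘ σ = B₁` and `B₂ ∘ σ = B₂`
  have hB1σ : ∀ a : H, B₁ (cocycleL B₁ B₂ a) = B₁ a := by
    intro a
    rw [← hcirc1 a, ← hB1 a 1, h11, mul_one]
  have hB2σ : ∀ a : H, B₂ (cocycleL B₁ B₂ a) = B₂ a := by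
    intro a
    rw [← hcirc1 a, ← hB2 a 1, h21, mul_one]
  -- `Δ ∘ σ = (σ ⊗ σ) ∘ Δ`
  have hΔσ : (comul : H →ₗ[F] H ⊗[F] H) ∘ₗ cocycleL B₁ B₂
      = TensorProduct.map (cocycleL B₁ B₂) (cocycleL B₁ B₂) ∘ₗ comul := by
    rw [hσdef]
    have e1 : (comul : H →ₗ[F] H ⊗[F] H) ∘ₗ RBAux.conv B₁ ((antipode (R := F)) ∘ₗ B₂)
        = RBAux.conv ((comul : H →ₗ[F] H ⊗[F] H) ∘ₗ B₁)
            ((comul : H →ₗ[F] H ⊗[F] H) ∘ₗ ((antipode (R := F)) ∘ₗ B₂)) :=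
      RBAux.algHom_comp_conv (Bialgebra.comulAlgHom F H) _ _
    have e3 : (comul : H →ₗ[F] H ⊗[F] H) ∘ₗ ((antipode (R := F)) ∘ₗ B₂)
        = TensorProduct.map ((antipode (R := F)) ∘ₗ B₂) ((antipode (R := F)) ∘ₗ B₂)
            ∘ₗ comul := by
      rw [← comp_assoc, RBAux.antipode_comul hcc, comp_assoc, h2Δ, ← comp_assoc,
        ← TensorProduct.map_comp]
    rw [e1, e3, h1Δ, RBAux.conv_split hcc]
  -- `σ ∘ σ = σ`
  have hσσ : ∀ a : H, cocycleL B₁ B₂ (cocycleL B₁ B₂ a) = cocycleL B₁ B₂ a := by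
    intro a
    have hc : comul (R := F) (cocycleL B₁ B₂ a)
        = TensorProduct.map (cocycleL B₁ B₂) (cocycleL B₁ B₂) (comul a) := congr($hΔσ a)
    show LinearMap.mul' F H (TensorProduct.map B₁ ((antipode (R := F)) ∘ₗ B₂)
        (comul (cocycleL B₁ B₂ a)))
      = LinearMap.mul' F H (TensorProduct.map B₁ ((antipode (R := F)) ∘ₗ B₂) (comul a))
    rw [hc]
    induction comul (R := F) a using TensorProduct.induction_on with
    | zero => simp
    | tmul x y => simp [mul'_apply, hB1σ, hB2σ]
    | add u v hu hv => simp only [map_add, hu, hv]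
  have hσ_id : cocycleL B₁ B₂ = LinearMap.id := by
    ext x
    obtain ⟨y, rfl⟩ := hsurj x
    simpa using hσσ y
  refine ⟨hσ_id, fun a b => ?_⟩
  -- `(S∘B₂) ⋆ B₂ = cunit`, hence `B₁ = id ⋆ B₂`
  have hSB : RBAux.conv ((antipode (R := F)) ∘ₗ B₂) B₂ = RBAux.cunit := by
    have h := RBAux.conv_comp_coalgMap h2Δ (antipode (R := F)) (LinearMap.id : H →ₗ[F] H)
    rw [id_comp, RBAux.conv_antipode_id] at h
    rw [h, RBAux.cunit, comp_assoc, h2ε]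
  have hB₁_eq : RBAux.conv (LinearMap.id : H →ₗ[F] H) B₂ = B₁ := by
    have h := RBAux.conv_assoc B₁ ((antipode (R := F)) ∘ₗ B₂) B₂
    rw [hSB, RBAux.conv_cunit, ← hσdef, hσ_id] at h
    exact h
  -- conclude
  rw [hB2 a b, circ_eq_conv, ← hB₁_eq, RBAux.mulRight_conv, RBAux.conv_assoc]
  congr 1
  rw [RBAux.conv_apply]
  induction comul (R := F) a using TensorProduct.induction_on with
  | zero => simp
  | tmul x y => simp [mul'_apply, RBAux.conv_apply]
  | add u v hu hv => simp only [map_add, hu, hv]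
end

section
/- Let H be a cocommutative Hopf algebra, φ:H→H a bialgebra homomorphism, and B:H→H a φ-twisted Rota-Baxter operator. Define L:H→H by L(a)=φ(B(a)). Then L(a)L(b)=L(B(a₁)bS(L(a₂))) for all a,b∈H; in particular (H,B,L) is a Rota-Baxter system of Hopf algebras. -/
open TensorProduct Coalgebra HopfAlgebra LinearMap

variable {F : Type*} [Field F] {H : Type*} [Ring H] [HopfAlgebra F H]

/-- If `φ` is a bialgebra endomorphism of a cocommutative Hopf algebra `H` and
`B` is a `φ`-twisted Rota-Baxter operator, then with `L = φ ∘ B` the triple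
`(H, B, L)` is a Rota-Baxter system of Hopf algebras (in particular
`L(a)L(b) = L(B(a₁) b S(L(a₂)))`). -/
theorem twisted_rb_gives_rbSystem
    (hcc : ∀ a : H, (TensorProduct.comm F H H) (Coalgebra.comul a) = Coalgebra.comul a)
    (φ : H →ₗ[F] H)
    (hφmul : ∀ a b : H, φ (a * b) = φ a * φ b) (hφone : φ 1 = 1)
    (hφc : Coalgebra.comul ∘ₗ φ = TensorProduct.map φ φ ∘ₗ Coalgebra.comul)
    (hφe : Coalgebra.counit ∘ₗ φ = Coalgebra.counit (R := F))
    (B : H →ₗ[F] H)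
    (hBc : Coalgebra.comul ∘ₗ B = TensorProduct.map B B ∘ₗ Coalgebra.comul)
    (hBe : Coalgebra.counit ∘ₗ B = Coalgebra.counit (R := F))
    (hB1 : B 1 = 1)
    (htw : ∀ a b : H, B a * B b = B (circ B (φ ∘ₗ B) a b)) :
    (∀ a b : H, (φ ∘ₗ B) a * (φ ∘ₗ B) b = (φ ∘ₗ B) (circ B (φ ∘ₗ B) a b)) ∧
    IsRBSystem B (φ ∘ₗ B) := by
  have hL : ∀ a b : H, (φ ∘ₗ B) a * (φ ∘ₗ B) b = (φ ∘ₗ B) (circ B (φ ∘ₗ B) a b) := by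
    intro a b
    simp only [LinearMap.comp_apply, ← hφmul, htw]
  refine ⟨hL, hBc, hBe, ?_, ?_, hB1, ?_, htw, hL⟩
  · calc Coalgebra.comul ∘ₗ (φ ∘ₗ B) = (Coalgebra.comul ∘ₗ φ) ∘ₗ B := by
          rw [LinearMap.comp_assoc]
      _ = TensorProduct.map φ φ ∘ₗ (Coalgebra.comul ∘ₗ B) := by
          rw [hφc, LinearMap.comp_assoc]
      _ = (TensorProduct.map φ φ ∘ₗ TensorProduct.map B B) ∘ₗ Coalgebra.comul := by
          rw [hBc, LinearMap.comp_assoc]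
      _ = TensorProduct.map (φ ∘ₗ B) (φ ∘ₗ B) ∘ₗ Coalgebra.comul := by
          rw [TensorProduct.map_comp]
  · calc Coalgebra.counit ∘ₗ (φ ∘ₗ B) = (Coalgebra.counit ∘ₗ φ) ∘ₗ B := by
          rw [LinearMap.comp_assoc]
      _ = Coalgebra.counit := by rw [hφe, hBe]
  · simp [hB1, hφone]
end

section
/- Let (H,B₁,B₂) be a Rota-Baxter system of Hopf algebras and let G(H) be its group of group-like elements. Then (G(H), B₁|_{G(H)}, S∘B₂|_{G(H)}) is a Rota-Baxter system of groups: for all a,b∈G(H), B₁(a)B₁(b) = B₁(B₁(a)·b·S(B₂(a))) and S(B₂(b))S(B₂(a)) = S(B₂(B₁(a)·b·S(B₂(a)))). -/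
open TensorProduct Coalgebra HopfAlgebra LinearMap

variable {F : Type*} [Field F] {H : Type*} [Ring H] [HopfAlgebra F H]

/-- The group-like elements of a Rota-Baxter system of Hopf algebras form a
Rota-Baxter system of groups `(G(H), B₁, S∘B₂)`. -/
theorem rbSystem_on_grouplikes
    (hcc : ∀ a : H, (TensorProduct.comm F H H) (Coalgebra.comul a) = Coalgebra.comul a)
    (B₁ B₂ : H →ₗ[F] H) (hRB : IsRBSystem B₁ B₂)
    (a b : H)
    (ha : Coalgebra.comul a = a ⊗ₜ[F] a) (ha' : Coalgebra.counit (R := F) a = 1)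
    (hb : Coalgebra.comul b = b ⊗ₜ[F] b) (hb' : Coalgebra.counit (R := F) b = 1) :
    B₁ a * B₁ b = B₁ (B₁ a * b * antipode (R := F) (B₂ a)) ∧
    antipode (R := F) (B₂ b) * antipode (R := F) (B₂ a) =
      antipode (R := F) (B₂ (B₁ a * b * antipode (R := F) (B₂ a))) := by
  obtain ⟨hc1, he1, hc2, he2, _, _, h1, h2⟩ := hRB
  have hcirc : circ B₁ B₂ a b = B₁ a * b * antipode (R := F) (B₂ a) := by
    simp [circ, circL, ha, mul_assoc]
  -- grouplike facts for B₂
  have hcBa : Coalgebra.comul (B₂ a) = B₂ a ⊗ₜ[F] B₂ a := by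
    have := LinearMap.congr_fun hc2 a
    simpa [ha] using this
  have hcBb : Coalgebra.comul (B₂ b) = B₂ b ⊗ₜ[F] B₂ b := by
    have := LinearMap.congr_fun hc2 b
    simpa [hb] using this
  have heBa : Coalgebra.counit (R := F) (B₂ a) = 1 := by
    have := LinearMap.congr_fun he2 a; simpa [ha'] using this
  have heBb : Coalgebra.counit (R := F) (B₂ b) = 1 := by
    have := LinearMap.congr_fun he2 b; simpa [hb'] using this
  have inv_of_gl : ∀ g : H, Coalgebra.comul g = g ⊗ₜ[F] g →
      Coalgebra.counit (R := F) g = 1 →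
      antipode (R := F) g * g = 1 ∧ g * antipode (R := F) g = 1 := by
    intro g hg hg'
    constructor
    · have := mul_antipode_rTensor_comul_apply (R := F) g
      simpa [hg, hg'] using this
    · have := mul_antipode_lTensor_comul_apply (R := F) g
      simpa [hg, hg'] using this
  have hxy : B₂ a * B₂ b = B₂ (B₁ a * b * antipode (R := F) (B₂ a)) := by
    rw [h2 a b, hcirc]
  -- B₂ a * B₂ b is grouplike
  have hcprod : Coalgebra.comul (B₂ a * B₂ b) = (B₂ a * B₂ b) ⊗ₜ[F] (B₂ a * B₂ b) := by
    rw [Bialgebra.comul_mul, hcBa, hcBb, Algebra.TensorProduct.tmul_mul_tmul]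
  have heprod : Coalgebra.counit (R := F) (B₂ a * B₂ b) = 1 := by
    rw [Bialgebra.counit_mul, heBa, heBb, mul_one]
  obtain ⟨hpl, hpr⟩ := inv_of_gl _ hcprod heprod
  obtain ⟨hal, har⟩ := inv_of_gl _ hcBa heBa
  obtain ⟨hbl, hbr⟩ := inv_of_gl _ hcBb heBb
  refine ⟨by rw [h1 a b, hcirc], ?_⟩
  calc antipode (R := F) (B₂ b) * antipode (R := F) (B₂ a)
      = (antipode (R := F) (B₂ b) * antipode (R := F) (B₂ a)) *
        ((B₂ a * B₂ b) * antipode (R := F) (B₂ a * B₂ b)) := by rw [hpr, mul_one]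
    _ = antipode (R := F) (B₂ b) * ((antipode (R := F) (B₂ a) * B₂ a) * B₂ b) *
        antipode (R := F) (B₂ a * B₂ b) := by simp only [mul_assoc]
    _ = antipode (R := F) (B₂ a * B₂ b) := by rw [hal, one_mul, hbl, one_mul]
    _ = antipode (R := F) (B₂ (B₁ a * b * antipode (R := F) (B₂ a))) := by rw [hxy]
end

section
/- Let (H,B₁,B₂) be a Rota-Baxter system of Hopf algebras and let P(H) be its Lie algebra of primitive elements with bracket [x,y]=xy−yx. Then (P(H), B₁|_{P(H)}, −B₂|_{P(H)}) is a Rota-Baxter system of Lie algebras: for all a,b∈P(H), [B₁(a),B₁(b)] = B₁([B₁(a),B₁(b)]−[B₂(a),B₂(b)]) and [B₂(b),B₂(a)] = −B₂([B₁(a),B₁(b)]−[B₂(a),B₂(b)]). -/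
open TensorProduct Coalgebra HopfAlgebra LinearMap

variable {F : Type*} [Field F] {H : Type*} [Ring H] [HopfAlgebra F H]

lemma antipode_one' : antipode (R := F) (1 : H) = 1 := by
  have := mul_antipode_rTensor_comul_apply (R := F) (a := (1 : H))
  simpa [Algebra.TensorProduct.one_def] using this

lemma counit_prim (a : H) (ha : Coalgebra.comul a = a ⊗ₜ[F] 1 + 1 ⊗ₜ[F] a) :
    Coalgebra.counit (R := F) a = 0 := by
  have h := rTensor_counit_comul (R := F) a
  rw [ha] at h
  simp only [map_add, rTensor_tmul, Bialgebra.counit_one] at h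
  have h2 := congrArg (TensorProduct.lid F H) h
  simp only [map_add, lid_tmul, one_smul] at h2
  have h3 : Coalgebra.counit (R := F) a • (1 : H) = 0 := by
    have := add_right_cancel (a := Coalgebra.counit (R := F) a • (1:H)) (b := a) (c := 0)
    simp only [zero_add] at this
    exact this h2
  have h4 := congrArg (Coalgebra.counit (R := F)) h3
  simpa [map_smul, Bialgebra.counit_one, smul_eq_mul] using h4

lemma antipode_prim (a : H) (ha : Coalgebra.comul a = a ⊗ₜ[F] 1 + 1 ⊗ₜ[F] a)
    (h0 : Coalgebra.counit (R := F) a = 0) : antipode (R := F) a = -a := by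
  have h := mul_antipode_rTensor_comul_apply (R := F) a
  rw [ha, h0] at h
  simp only [map_add, rTensor_tmul, mul'_apply, antipode_one', map_zero, mul_one, one_mul] at h
  exact eq_neg_of_add_eq_zero_left h

lemma comul_mul_prim (u v : H) (hu : Coalgebra.comul u = u ⊗ₜ[F] 1 + 1 ⊗ₜ[F] u)
    (hv : Coalgebra.comul v = v ⊗ₜ[F] 1 + 1 ⊗ₜ[F] v) :
    Coalgebra.comul (u * v) =
      (u * v) ⊗ₜ[F] 1 + u ⊗ₜ[F] v + v ⊗ₜ[F] u + 1 ⊗ₜ[F] (u * v) := by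
  rw [Bialgebra.comul_mul, hu, hv]
  simp only [add_mul, mul_add, Algebra.TensorProduct.tmul_mul_tmul, one_mul, mul_one]
  abel

lemma antipode_four (w u v : H)
    (hw : Coalgebra.comul w = w ⊗ₜ[F] 1 + u ⊗ₜ[F] v + v ⊗ₜ[F] u + 1 ⊗ₜ[F] w)
    (h0 : Coalgebra.counit (R := F) w = 0)
    (hsu : antipode (R := F) u = -u) (hsv : antipode (R := F) v = -v) :
    antipode (R := F) w = -w + u * v + v * u := by
  have h := mul_antipode_rTensor_comul_apply (R := F) w
  rw [hw, h0] at h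
  simp only [map_add, rTensor_tmul, mul'_apply, antipode_one', map_zero, mul_one, one_mul,
    hsu, hsv, neg_mul] at h
  apply eq_of_sub_eq_zero
  calc antipode (R := F) w - (-w + u * v + v * u)
      = antipode (R := F) w + -(u * v) + -(v * u) + w := by abel
    _ = 0 := h

lemma circ_prim (B₁ B₂ : H →ₗ[F] H) (a b : H)
    (ha : Coalgebra.comul a = a ⊗ₜ[F] (1 : H) + (1 : H) ⊗ₜ[F] a) :
    circ B₁ B₂ a b =
      B₁ a * b * antipode (R := F) (B₂ 1) + B₁ 1 * b * antipode (R := F) (B₂ a) := by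
  simp [circ, circL, ha, add_tmul, mul_assoc]

lemma circ_four (B₁ B₂ : H →ₗ[F] H) (w u v b : H)
    (hw : Coalgebra.comul w = w ⊗ₜ[F] 1 + u ⊗ₜ[F] v + v ⊗ₜ[F] u + 1 ⊗ₜ[F] w) :
    circ B₁ B₂ w b =
      B₁ w * b * antipode (R := F) (B₂ 1) + B₁ u * b * antipode (R := F) (B₂ v)
        + B₁ v * b * antipode (R := F) (B₂ u) + B₁ 1 * b * antipode (R := F) (B₂ w) := by
  simp [circ, circL, hw, add_tmul, mul_assoc]

lemma primB (B : H →ₗ[F] H)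
    (hc : Coalgebra.comul ∘ₗ B = TensorProduct.map B B ∘ₗ Coalgebra.comul) (h1 : B 1 = 1)
    (x : H) (hx : Coalgebra.comul x = x ⊗ₜ[F] 1 + 1 ⊗ₜ[F] x) :
    Coalgebra.comul (B x) = B x ⊗ₜ[F] 1 + 1 ⊗ₜ[F] B x := by
  have h := LinearMap.congr_fun hc x
  simp only [comp_apply] at h
  rw [h, hx, map_add, map_tmul, map_tmul, h1]

lemma cntB (B : H →ₗ[F] H) (he : Coalgebra.counit ∘ₗ B = Coalgebra.counit (R := F)) (x : H) :
    Coalgebra.counit (R := F) (B x) = Coalgebra.counit (R := F) x := by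
  have h := LinearMap.congr_fun he x
  simpa using h

lemma sigma_prod (B₁ B₂ : H →ₗ[F] H)
    (h2c : Coalgebra.comul ∘ₗ B₂ = TensorProduct.map B₂ B₂ ∘ₗ Coalgebra.comul)
    (h2e : Coalgebra.counit ∘ₗ B₂ = Coalgebra.counit (R := F))
    (h11 : B₁ 1 = 1) (h21 : B₂ 1 = 1)
    (u v : H) (hu : Coalgebra.comul u = u ⊗ₜ[F] 1 + 1 ⊗ₜ[F] u)
    (hv : Coalgebra.comul v = v ⊗ₜ[F] 1 + 1 ⊗ₜ[F] v)
    (hu0 : Coalgebra.counit (R := F) u = 0) (hv0 : Coalgebra.counit (R := F) v = 0) :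
    circ B₁ B₂ (u * v) 1 =
      B₁ (u * v) - B₂ (u * v) - B₁ u * B₂ v - B₁ v * B₂ u + B₂ u * B₂ v + B₂ v * B₂ u := by
  have hBu := primB B₂ h2c h21 u hu
  have hBv := primB B₂ h2c h21 v hv
  have hsu : antipode (R := F) (B₂ u) = -(B₂ u) :=
    antipode_prim _ hBu (by rw [cntB B₂ h2e u, hu0])
  have hsv : antipode (R := F) (B₂ v) = -(B₂ v) :=
    antipode_prim _ hBv (by rw [cntB B₂ h2e v, hv0])
  have hcm := comul_mul_prim u v hu hv
  have hBuv : Coalgebra.comul (B₂ (u * v)) =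
      B₂ (u * v) ⊗ₜ[F] 1 + B₂ u ⊗ₜ[F] B₂ v + B₂ v ⊗ₜ[F] B₂ u + 1 ⊗ₜ[F] B₂ (u * v) := by
    have h := LinearMap.congr_fun h2c (u * v)
    simp only [comp_apply] at h
    rw [h, hcm]
    simp only [map_add, map_tmul, h21]
  have h0uv : Coalgebra.counit (R := F) (B₂ (u * v)) = 0 := by
    rw [cntB B₂ h2e, Bialgebra.counit_mul, hu0, zero_mul]
  have hS : antipode (R := F) (B₂ (u * v)) =
      -(B₂ (u * v)) + B₂ u * B₂ v + B₂ v * B₂ u :=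
    antipode_four _ _ _ hBuv h0uv hsu hsv
  rw [circ_four B₁ B₂ (u * v) u v 1 hcm, h11, h21, antipode_one', hsu, hsv, hS]
  noncomm_ring

/-- The primitive elements of a Rota-Baxter system of Hopf algebras form a
Rota-Baxter system of Lie algebras `(P(H), B₁, −B₂)` with `[x,y] = xy − yx`. -/
theorem rbSystem_on_primitives
    (hcc : ∀ a : H, (TensorProduct.comm F H H) (Coalgebra.comul a) = Coalgebra.comul a)
    (B₁ B₂ : H →ₗ[F] H) (hRB : IsRBSystem B₁ B₂)
    (a b : H)
    (ha : Coalgebra.comul a = a ⊗ₜ[F] (1 : H) + (1 : H) ⊗ₜ[F] a)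
    (hb : Coalgebra.comul b = b ⊗ₜ[F] (1 : H) + (1 : H) ⊗ₜ[F] b) :
    B₁ a * B₁ b - B₁ b * B₁ a =
      B₁ ((B₁ a * B₁ b - B₁ b * B₁ a) - (B₂ a * B₂ b - B₂ b * B₂ a)) ∧
    B₂ b * B₂ a - B₂ a * B₂ b =
      - B₂ ((B₁ a * B₁ b - B₁ b * B₁ a) - (B₂ a * B₂ b - B₂ b * B₂ a)) := by
  obtain ⟨h1c, h1e, h2c, h2e, h11, h21, hB1, hB2⟩ := hRB
  -- basic facts about the primitives a, b and their images
  have ha0 : Coalgebra.counit (R := F) a = 0 := counit_prim a ha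
  have hb0 : Coalgebra.counit (R := F) b = 0 := counit_prim b hb
  have pB1a := primB B₁ h1c h11 a ha
  have pB1b := primB B₁ h1c h11 b hb
  have pB2a := primB B₂ h2c h21 a ha
  have pB2b := primB B₂ h2c h21 b hb
  have cB1a : Coalgebra.counit (R := F) (B₁ a) = 0 := by rw [cntB B₁ h1e, ha0]
  have cB1b : Coalgebra.counit (R := F) (B₁ b) = 0 := by rw [cntB B₁ h1e, hb0]
  have cB2a : Coalgebra.counit (R := F) (B₂ a) = 0 := by rw [cntB B₂ h2e, ha0]
  have cB2b : Coalgebra.counit (R := F) (B₂ b) = 0 := by rw [cntB B₂ h2e, hb0]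
  have sB2a : antipode (R := F) (B₂ a) = -(B₂ a) := antipode_prim _ pB2a cB2a
  have sB2b : antipode (R := F) (B₂ b) = -(B₂ b) := antipode_prim _ pB2b cB2b
  -- circ on primitives
  have ca : circ B₁ B₂ a b = B₁ a * b - b * B₂ a := by
    rw [circ_prim B₁ B₂ a b ha, h11, h21, antipode_one', sB2a]
    noncomm_ring
  have cb : circ B₁ B₂ b a = B₁ b * a - a * B₂ b := by
    rw [circ_prim B₁ B₂ b a hb, h11, h21, antipode_one', sB2b]
    noncomm_ring
  -- the element z
  set z : H := (B₁ a * b - b * B₂ a) - (B₁ b * a - a * B₂ b) with hzdef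
  have hz1 : B₁ a * B₁ b - B₁ b * B₁ a = B₁ z := by
    rw [hB1 a b, hB1 b a, ca, cb, ← map_sub]
  have hz2 : B₂ a * B₂ b - B₂ b * B₂ a = B₂ z := by
    rw [hB2 a b, hB2 b a, ca, cb, ← map_sub]
  -- the sigma identities (circ with second argument 1)
  have σ₁ : ∀ w : H, B₁ w = B₁ (circ B₁ B₂ w 1) := by
    intro w; have h := hB1 w 1; rwa [h11, mul_one] at h
  have σ₂ : ∀ w : H, B₂ w = B₂ (circ B₁ B₂ w 1) := by
    intro w; have h := hB2 w 1; rwa [h21, mul_one] at h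
  -- circ on a primitive with second argument 1
  have circ1 : ∀ x : H, Coalgebra.comul x = x ⊗ₜ[F] 1 + 1 ⊗ₜ[F] x →
      Coalgebra.counit (R := F) x = 0 → circ B₁ B₂ x 1 = B₁ x - B₂ x := by
    intro x hx hx0
    have sx : antipode (R := F) (B₂ x) = -(B₂ x) :=
      antipode_prim _ (primB B₂ h2c h21 x hx) (by rw [cntB B₂ h2e, hx0])
    rw [circ_prim B₁ B₂ x 1 hx, h11, h21, antipode_one', sx]
    noncomm_ring
  -- key composite identities
  have k1a : B₁ (B₁ a) = B₁ a + B₁ (B₂ a) := by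
    have h := σ₁ a
    rw [circ1 a ha ha0, map_sub, eq_sub_iff_add_eq] at h
    exact h.symm
  have k2a : B₂ (B₁ a) = B₂ a + B₂ (B₂ a) := by
    have h := σ₂ a
    rw [circ1 a ha ha0, map_sub, eq_sub_iff_add_eq] at h
    exact h.symm
  have k1b : B₁ (B₁ b) = B₁ b + B₁ (B₂ b) := by
    have h := σ₁ b
    rw [circ1 b hb hb0, map_sub, eq_sub_iff_add_eq] at h
    exact h.symm
  have k2b : B₂ (B₁ b) = B₂ b + B₂ (B₂ b) := by
    have h := σ₂ b
    rw [circ1 b hb hb0, map_sub, eq_sub_iff_add_eq] at h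
    exact h.symm
  -- the main computation : circ z 1 = B₁ z - B₂ z
  have hkey : circ B₁ B₂ z 1 = B₁ z - B₂ z := by
    have l1 := sigma_prod B₁ B₂ h2c h2e h11 h21 (B₁ a) b pB1a hb cB1a hb0
    have l2 := sigma_prod B₁ B₂ h2c h2e h11 h21 b (B₂ a) hb pB2a hb0 cB2a
    have l3 := sigma_prod B₁ B₂ h2c h2e h11 h21 (B₁ b) a pB1b ha cB1b ha0
    have l4 := sigma_prod B₁ B₂ h2c h2e h11 h21 a (B₂ b) ha pB2b ha0 cB2b
    have hlin : circ B₁ B₂ z 1 =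
        circ B₁ B₂ (B₁ a * b) 1 - circ B₁ B₂ (b * B₂ a) 1 -
          (circ B₁ B₂ (B₁ b * a) 1 - circ B₁ B₂ (a * B₂ b) 1) := by
      simp [hzdef, circ, sub_tmul, map_sub]
    rw [hlin, l1, l2, l3, l4, hzdef]
    simp only [map_sub]
    rw [k1a, k2a, k1b, k2b]
    noncomm_ring
  constructor
  · rw [hz1, hz2]
    have h := σ₁ z
    rwa [hkey] at h
  · have hneg : B₂ b * B₂ a - B₂ a * B₂ b = -(B₂ z) := by rw [← hz2]; abel
    rw [hz1, hz2, hneg]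
    have h := σ₂ z
    rw [hkey] at h
    exact congrArg (fun t => -t) h
end
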